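/- arXiv:2406.07457 — 4 statements merged into one kernel-verified Lean document; each statement's English description precedes it below -/
import Mathlib

section
/- Setting: a probability space (Ω, 𝓐, ℙ); a standard Borel space Θ and a random variable F : Ω → Θ (the latent mechanism); a sequence of observations (Z_i)_{i≥1} generating the filtration 𝓖_n := σ(Z_1, …, Z_n), with 𝓖_∞ := σ(⋃_n 𝓖_n); a countable discrete measurable space 𝒴 and a random variable W : Ω → 𝒴 (the response to a fixed query x). For y ∈ 𝒴, p_F(y) denotes a fixed version of ℙ(W = y ∣ σ(F)) and p_n(y) a fixed version of ℙ(W = y ∣ 𝓖_n). Assume: (CI) for every y ∈ 𝒴 and every sub-σ-algebra 𝒢 ⊆ 𝓖_∞, ℙ(W = y ∣ σ(F) ⊔ 𝒢) = p_F(y) a.s.; (ID) for every y ∈ 𝒴, p_F(y) is a.s. equal to a 𝓖_∞-measurable random variable; (POS) for every y ∈ 𝒴, p_F(y) > 0 a.s. Then almost surely, simultaneously for every y ∈ 𝒴, log p_n(y) → log p_F(y) as n → ∞; in particular, evaluating at the random response itself, for ℙ-a.e. ω the sequence log p_n(W(ω))(ω) converges to log p_F(W(ω))(ω). -/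
open MeasureTheory Filter

/-- Lemma C.1 ('log-infty'): under (CI), (ID) and positivity of the likelihood,
almost surely `log p_n(y) → log p_F(y)` simultaneously for every response `y`; in
particular, evaluating at the random response `W`, `log p_n(W) → log p_F(W)` a.s. -/
theorem log_posterior_predictive_tendsto_log_likelihood
    {Ω : Type*} (𝓖inf : MeasurableSpace Ω) [m0 : MeasurableSpace Ω] (ℙ : Measure Ω) [IsProbabilityMeasure ℙ]
    {Θ : Type*} [mΘ : MeasurableSpace Θ] [StandardBorelSpace Θ]
    (F : Ω → Θ) (hF : Measurable F)
    {E : Type*} [mE : MeasurableSpace E]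
    (Z : ℕ → Ω → E) (hZ : ∀ i, Measurable (Z i))
    (𝓖 : ℕ → MeasurableSpace Ω)
    (h𝓖 : ∀ n, 𝓖 n = ⨆ i ∈ Finset.range n, MeasurableSpace.comap (Z i) mE)
    (h𝓖inf : 𝓖inf = ⨆ n, 𝓖 n)
    {𝒴 : Type*} [m𝒴 : MeasurableSpace 𝒴] [MeasurableSingletonClass 𝒴] [Countable 𝒴]
    (W : Ω → 𝒴) (hW : Measurable W)
    (pF : 𝒴 → Ω → ℝ) (pn : ℕ → 𝒴 → Ω → ℝ)
    (hpF : ∀ y, pF y =ᵐ[ℙ]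
        ℙ[(W ⁻¹' {y}).indicator (fun _ => (1 : ℝ)) | MeasurableSpace.comap F mΘ])
    (hpn : ∀ n y, pn n y =ᵐ[ℙ]
        ℙ[(W ⁻¹' {y}).indicator (fun _ => (1 : ℝ)) | 𝓖 n])
    (hCI : ∀ (y : 𝒴) (𝒢 : MeasurableSpace Ω), 𝒢 ≤ 𝓖inf →
        ℙ[(W ⁻¹' {y}).indicator (fun _ => (1 : ℝ)) |
            MeasurableSpace.comap F mΘ ⊔ 𝒢] =ᵐ[ℙ] pF y)
    (hID : ∀ y : 𝒴, ∃ g : Ω → ℝ, Measurable[𝓖inf] g ∧ pF y =ᵐ[ℙ] g)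
    (hPOS : ∀ y : 𝒴, ∀ᵐ ω ∂ℙ, 0 < pF y ω) :
    ∀ᵐ ω ∂ℙ,
      (∀ y : 𝒴,
        Tendsto (fun n => Real.log (pn n y ω)) atTop (nhds (Real.log (pF y ω)))) ∧
      Tendsto (fun n => Real.log (pn n (W ω) ω)) atTop
        (nhds (Real.log (pF (W ω) ω))) := by
  -- the filtration
  have h𝓖le : ∀ n, 𝓖 n ≤ m0 := by
    intro n; rw [h𝓖 n]
    exact iSup₂_le fun i _ => (hZ i).comap_le
  have h𝓖mono : Monotone 𝓖 := by
    intro n m hnm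
    rw [h𝓖 n, h𝓖 m]
    exact biSup_mono fun i hi => Finset.range_subset_range.2 hnm hi
  set ℱ : Filtration ℕ m0 := ⟨𝓖, h𝓖mono, h𝓖le⟩ with hℱ
  have hℱsup : (⨆ n, ℱ n) = 𝓖inf := by rw [h𝓖inf]
  have h𝓖infle : 𝓖inf ≤ m0 := by rw [h𝓖inf]; exact iSup_le h𝓖le
  -- key a.e. convergence for each y
  have key : ∀ y : 𝒴, ∀ᵐ ω ∂ℙ,
      Tendsto (fun n => Real.log (pn n y ω)) atTop (nhds (Real.log (pF y ω))) := by
    intro y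
    set f : Ω → ℝ := (W ⁻¹' {y}).indicator (fun _ => (1 : ℝ)) with hf
    have hms : MeasurableSet[m0] (W ⁻¹' {y}) := hW (measurableSet_singleton y)
    have hfint : Integrable f ℙ := by
      letI : MeasurableSpace Ω := m0
      exact (integrable_const (1 : ℝ)).indicator hms
    obtain ⟨g, hgm, hgeq⟩ := hID y
    have hgint : Integrable g ℙ :=
      (integrable_condExp.congr (hpF y).symm).congr hgeq
    -- ℙ[f|𝓖inf] =ᵐ g
    have hbig : ℙ[f | MeasurableSpace.comap F mΘ ⊔ 𝓖inf] =ᵐ[ℙ] pF y :=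
      hCI y 𝓖inf le_rfl
    have h1 : ℙ[f | 𝓖inf] =ᵐ[ℙ] g := by
      have t1 : ℙ[ℙ[f | MeasurableSpace.comap F mΘ ⊔ 𝓖inf] | 𝓖inf] =ᵐ[ℙ] ℙ[f | 𝓖inf] :=
        condExp_condExp_of_le le_sup_right
          (sup_le hF.comap_le h𝓖infle)
      have t2 : ℙ[ℙ[f | MeasurableSpace.comap F mΘ ⊔ 𝓖inf] | 𝓖inf] =ᵐ[ℙ] ℙ[g | 𝓖inf] :=
        condExp_congr_ae (hbig.trans hgeq)
      have t3 : ℙ[g | 𝓖inf] =ᵐ[ℙ] g :=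
        Filter.EventuallyEq.of_eq
          (condExp_of_stronglyMeasurable h𝓖infle hgm.stronglyMeasurable hgint)
      exact t1.symm.trans (t2.trans t3)
    -- martingale convergence
    have hconv : ∀ᵐ ω ∂ℙ, Tendsto (fun n => (ℙ[g | ℱ n]) ω) atTop (nhds (g ω)) :=
      hgint.tendsto_ae_condExp (hℱsup ▸ hgm.stronglyMeasurable)
    -- ℙ[g|𝓖 n] =ᵐ ℙ[f|𝓖 n] =ᵐ pn n y, for all n simultaneously
    have hcongr : ∀ᵐ ω ∂ℙ, ∀ n, pn n y ω = (ℙ[g | ℱ n]) ω := by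
      rw [ae_all_iff]
      intro n
      have e1 : ℙ[g | 𝓖 n] =ᵐ[ℙ] ℙ[ℙ[f | 𝓖inf] | 𝓖 n] := condExp_congr_ae h1.symm
      have e2 : ℙ[ℙ[f | 𝓖inf] | 𝓖 n] =ᵐ[ℙ] ℙ[f | 𝓖 n] :=
        condExp_condExp_of_le (h𝓖inf ▸ le_iSup 𝓖 n) h𝓖infle
      exact (hpn n y).trans ((e1.trans e2).symm)
    filter_upwards [hconv, hcongr, hgeq, hPOS y] with ω hc hcg hge hpos
    have hc' : Tendsto (fun n => pn n y ω) atTop (nhds (pF y ω)) := by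
      rw [hge]
      exact hc.congr fun n => (hcg n).symm
    exact ((Real.continuousAt_log (ne_of_gt (hge ▸ hge ▸ hpos))).tendsto.comp hc')
  filter_upwards [ae_all_iff.2 key] with ω h
  exact ⟨h, h (W ω)⟩
end

section
/- Setting: a probability space (Ω, 𝓐, ℙ); a standard Borel space Θ and a random variable F : Ω → Θ (the latent mechanism); a sequence of observations (Z_i)_{i≥1} generating the filtration 𝓖_n := σ(Z_1, …, Z_n), with 𝓖_∞ := σ(⋃_n 𝓖_n); a countable discrete measurable space 𝒴 and a random variable W : Ω → 𝒴 (the response to a fixed query x). For y ∈ 𝒴, p_F(y) denotes a fixed version of ℙ(W = y ∣ σ(F)) and p_n(y) a fixed version of ℙ(W = y ∣ 𝓖_n). Assume: (CI) for every y ∈ 𝒴 and every sub-σ-algebra 𝒢 ⊆ 𝓖_∞, ℙ(W = y ∣ σ(F) ⊔ 𝒢) = p_F(y) a.s.; (ID) for every y ∈ 𝒴, p_F(y) is a.s. equal to a 𝓖_∞-measurable random variable; (POS) for every y ∈ 𝒴, p_F(y) > 0 a.s. Let p_∞(y) := lim_{n→∞} p_n(y) (which exists almost surely for every y). For a probability mass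 function ρ on 𝒴 and ε ∈ (0,1), define Q_ε(ρ) := sInf { q ∈ ℝ : ε ≤ ∑_{y : log ρ(y) ≤ q} ρ(y) }. Then almost surely, for every ε ∈ (0,1), Q_ε(p_F) = Q_ε(p_∞). -/
open MeasureTheory Filter

/-- Quantile equality (eqs. (26)–(27) in the proof of Theorem 2): under (CI), (ID),
(POS), the ε-quantile of the log-likelihood under the likelihood coincides a.s.
with the ε-quantile of the limiting log posterior predictive under the limiting
posterior predictive, simultaneously for all ε ∈ (0,1). -/
theorem quantile_likelihood_eq_quantile_limit_predictive
    {Ω : Type*} (𝓖inf : MeasurableSpace Ω) [m0 : MeasurableSpace Ω] (ℙ : Measure Ω) [IsProbabilityMeasure ℙ]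
    {Θ : Type*} [mΘ : MeasurableSpace Θ] [StandardBorelSpace Θ]
    (F : Ω → Θ) (hF : Measurable F)
    {E : Type*} [mE : MeasurableSpace E]
    (Z : ℕ → Ω → E) (hZ : ∀ i, Measurable (Z i))
    (𝓖 : ℕ → MeasurableSpace Ω)
    (h𝓖 : ∀ n, 𝓖 n = ⨆ i ∈ Finset.range n, MeasurableSpace.comap (Z i) mE)
    (h𝓖inf : 𝓖inf = ⨆ n, 𝓖 n)
    {𝒴 : Type*} [m𝒴 : MeasurableSpace 𝒴] [MeasurableSingletonClass 𝒴] [Countable 𝒴]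
    (W : Ω → 𝒴) (hW : Measurable W)
    (pF : 𝒴 → Ω → ℝ) (pn : ℕ → 𝒴 → Ω → ℝ)
    (hpF : ∀ y, pF y =ᵐ[ℙ]
        ℙ[(W ⁻¹' {y}).indicator (fun _ => (1 : ℝ)) | MeasurableSpace.comap F mΘ])
    (hpn : ∀ n y, pn n y =ᵐ[ℙ]
        ℙ[(W ⁻¹' {y}).indicator (fun _ => (1 : ℝ)) | 𝓖 n])
    (hCI : ∀ (y : 𝒴) (𝒢 : MeasurableSpace Ω), 𝒢 ≤ 𝓖inf →
        ℙ[(W ⁻¹' {y}).indicator (fun _ => (1 : ℝ)) |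
            MeasurableSpace.comap F mΘ ⊔ 𝒢] =ᵐ[ℙ] pF y)
    (hID : ∀ y : 𝒴, ∃ g : Ω → ℝ, Measurable[𝓖inf] g ∧ pF y =ᵐ[ℙ] g)
    (hPOS : ∀ y : 𝒴, ∀ᵐ ω ∂ℙ, 0 < pF y ω)
    (pinf : 𝒴 → Ω → ℝ)
    (hpinf : ∀ y, ∀ᵐ ω ∂ℙ, Tendsto (fun n => pn n y ω) atTop (nhds (pinf y ω)))
    (Q : (𝒴 → ℝ) → ℝ → ℝ)
    (hQ : ∀ (ρ : 𝒴 → ℝ) (ε : ℝ),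
        Q ρ ε = sInf {q : ℝ | ε ≤ ∑' y, ({y' : 𝒴 | Real.log (ρ y') ≤ q}).indicator ρ y}) :
    ∀ᵐ ω ∂ℙ, ∀ ε ∈ Set.Ioo (0 : ℝ) 1,
      Q (fun y => pF y ω) ε = Q (fun y => pinf y ω) ε := by
  letI : MeasurableSpace Ω := m0
  -- Each 𝓖 n is a sub-σ-algebra of m0, and they are monotone: build a filtration.
  have h𝓖le : ∀ n, 𝓖 n ≤ m0 := by
    intro n
    rw [h𝓖 n]
    exact iSup₂_le fun i _ => (hZ i).comap_le
  have h𝓖mono : Monotone 𝓖 := by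
    intro a b hab
    rw [h𝓖 a, h𝓖 b]
    exact iSup₂_le fun i hi =>
      le_iSup₂ (f := fun i (_ : i ∈ Finset.range b) => MeasurableSpace.comap (Z i) mE) i
        (Finset.mem_range.2 (lt_of_lt_of_le (Finset.mem_range.1 hi) hab))
  set ℱ : Filtration ℕ m0 := ⟨𝓖, h𝓖mono, h𝓖le⟩ with hℱ
  have h𝓖infle : 𝓖inf ≤ m0 := by rw [h𝓖inf]; exact iSup_le h𝓖le
  -- The key claim: for each y, pinf y = pF y a.s.
  have key : ∀ y : 𝒴, pinf y =ᵐ[ℙ] pF y := by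
    intro y
    obtain ⟨g, hgmeas, hgae⟩ := hID y
    set f : Ω → ℝ := (W ⁻¹' {y}).indicator (fun _ => (1 : ℝ)) with hf
    have hWy : MeasurableSet[m0] (W ⁻¹' {y}) := hW (measurableSet_singleton y)
    have hfint : Integrable f ℙ := (integrable_const (1 : ℝ)).indicator hWy
    -- condexp of f given 𝓖inf equals pF y a.s.
    have htower : ℙ[f | 𝓖inf] =ᵐ[ℙ] pF y := by
      have hle : 𝓖inf ≤ MeasurableSpace.comap F mΘ ⊔ 𝓖inf := le_sup_right
      have hle2 : MeasurableSpace.comap F mΘ ⊔ 𝓖inf ≤ m0 := sup_le hF.comap_le h𝓖infle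
      have h1 : ℙ[ℙ[f | MeasurableSpace.comap F mΘ ⊔ 𝓖inf] | 𝓖inf] =ᵐ[ℙ] ℙ[f | 𝓖inf] :=
        condExp_condExp_of_le hle hle2
      have h2 : ℙ[ℙ[f | MeasurableSpace.comap F mΘ ⊔ 𝓖inf] | 𝓖inf] =ᵐ[ℙ] ℙ[g | 𝓖inf] :=
        condExp_congr_ae ((hCI y 𝓖inf le_rfl).trans hgae)
      have hgint : Integrable g ℙ := (integrable_condExp.congr (hpF y).symm).congr hgae
      have h3 : ℙ[g | 𝓖inf] =ᵐ[ℙ] g := Filter.EventuallyEq.of_eq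
        (condExp_of_stronglyMeasurable h𝓖infle hgmeas.stronglyMeasurable hgint)
      exact (h1.symm.trans (h2.trans h3)).trans hgae.symm
    -- Lévy upward: pn n y → ℙ[f | ⨆ n, ℱ n] a.s.
    have hlevy := tendsto_ae_condExp (μ := ℙ) (ℱ := ℱ) f
    have hsup : (⨆ n, ℱ n) = 𝓖inf := by rw [h𝓖inf]
    rw [hsup] at hlevy
    have hpnall : ∀ᵐ ω ∂ℙ, ∀ n, pn n y ω = (ℙ[f | 𝓖 n]) ω := by
      rw [ae_all_iff]; exact fun n => hpn n y
    filter_upwards [hlevy, hpnall, hpinf y, htower] with ω h1 h2 h3 h4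
    have : Tendsto (fun n => pn n y ω) atTop (nhds ((ℙ[f | 𝓖inf]) ω)) := by
      have : (fun n => pn n y ω) = fun n => (ℙ[f | ℱ n]) ω := funext fun n => h2 n
      rw [this]; exact h1
    rw [← h4]
    exact tendsto_nhds_unique h3 this
  have keyall : ∀ᵐ ω ∂ℙ, ∀ y, pinf y ω = pF y ω := by
    rw [ae_all_iff]; exact key
  filter_upwards [keyall] with ω hω ε _
  have : (fun y => pinf y ω) = fun y => pF y ω := funext hω
  rw [this]
end

section
/- Setting: a probability space (Ω, 𝓐, ℙ); a standard Borel space Θ and a random variable F : Ω → Θ (the latent mechanism); a sequence of observations (Z_i)_{i≥1} generating the filtration 𝓖_n := σ(Z_1, …, Z_n), with 𝓖_∞ := σ(⋃_n 𝓖_n); a countable discrete measurable space 𝒴 and a random variable W : Ω → 𝒴 (the response to a fixed query x). For y ∈ 𝒴, p_F(y) denotes a fixed version of ℙ(W = y ∣ σ(F)) and p_n(y) a fixed version of ℙ(W = y ∣ 𝓖_n). Assume: (CI) for every y ∈ 𝒴 and every sub-σ-algebra 𝒢 ⊆ 𝓖_∞, ℙ(W = y ∣ σ(F) ⊔ 𝒢)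 = p_F(y) a.s.; (ID) for every y ∈ 𝒴, p_F(y) is a.s. equal to a 𝓖_∞-measurable random variable; (POS) for every y ∈ 𝒴, p_F(y) > 0 a.s. Let p_∞(y) := lim_{n→∞} p_n(y) (which exists almost surely for every y). Let W' : Ω → 𝒴 be a random variable independent of σ(F) ⊔ 𝓖_∞ and with the same law as W. For a probability mass function ρ on 𝒴 and ε ∈ (0,1), define Q_ε(ρ) := sInf { q ∈ ℝ : ε ≤ ∑_{y : log ρ(y) ≤ q} ρ(y) }. Then for every ε ∈ (0,1): ℙ( { ω : log p_F(W'(ω))(ω) < Q_ε(p_F(·)(ω)) } ) = ℙ( { ω : log p_∞(W'(ω))(ω) < Q_ε(p_∞(·)(ω)) } ). -/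
open MeasureTheory Filter

/-- Theorem 2 (PHR via Posterior Predictive), countable response space: for an
independent draw `W'` with the law of `W`, the probability that the log-likelihood
of `W'` falls below its ε-quantile under the likelihood equals the probability that
the limiting log posterior predictive of `W'` falls below its ε-quantile under the
limiting posterior predictive. -/
theorem phr_via_posterior_predictive
    {Ω : Type*} (𝓖inf : MeasurableSpace Ω) [m0 : MeasurableSpace Ω] (ℙ : Measure Ω) [IsProbabilityMeasure ℙ]
    {Θ : Type*} [mΘ : MeasurableSpace Θ] [StandardBorelSpace Θ]
    (F : Ω → Θ) (hF : Measurable F)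
    {E : Type*} [mE : MeasurableSpace E]
    (Z : ℕ → Ω → E) (hZ : ∀ i, Measurable (Z i))
    (𝓖 : ℕ → MeasurableSpace Ω)
    (h𝓖 : ∀ n, 𝓖 n = ⨆ i ∈ Finset.range n, MeasurableSpace.comap (Z i) mE)
    (h𝓖inf : 𝓖inf = ⨆ n, 𝓖 n)
    {𝒴 : Type*} [m𝒴 : MeasurableSpace 𝒴] [MeasurableSingletonClass 𝒴] [Countable 𝒴]
    (W : Ω → 𝒴) (hW : Measurable W)
    (pF : 𝒴 → Ω → ℝ) (pn : ℕ → 𝒴 → Ω → ℝ)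
    (hpF : ∀ y, pF y =ᵐ[ℙ]
        ℙ[(W ⁻¹' {y}).indicator (fun _ => (1 : ℝ)) | MeasurableSpace.comap F mΘ])
    (hpn : ∀ n y, pn n y =ᵐ[ℙ]
        ℙ[(W ⁻¹' {y}).indicator (fun _ => (1 : ℝ)) | 𝓖 n])
    (hCI : ∀ (y : 𝒴) (𝒢 : MeasurableSpace Ω), 𝒢 ≤ 𝓖inf →
        ℙ[(W ⁻¹' {y}).indicator (fun _ => (1 : ℝ)) |
            MeasurableSpace.comap F mΘ ⊔ 𝒢] =ᵐ[ℙ] pF y)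
    (hID : ∀ y : 𝒴, ∃ g : Ω → ℝ, Measurable[𝓖inf] g ∧ pF y =ᵐ[ℙ] g)
    (hPOS : ∀ y : 𝒴, ∀ᵐ ω ∂ℙ, 0 < pF y ω)
    (pinf : 𝒴 → Ω → ℝ)
    (hpinf : ∀ y, ∀ᵐ ω ∂ℙ, Tendsto (fun n => pn n y ω) atTop (nhds (pinf y ω)))
    (W' : Ω → 𝒴) (hW' : Measurable W')
    (hW'indep : ProbabilityTheory.Indep (MeasurableSpace.comap W' m𝒴)
        (MeasurableSpace.comap F mΘ ⊔ 𝓖inf) ℙ)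
    (hW'law : @Measure.map Ω 𝒴 m0 m𝒴 W' ℙ = @Measure.map Ω 𝒴 m0 m𝒴 W ℙ)
    (Q : (𝒴 → ℝ) → ℝ → ℝ)
    (hQ : ∀ (ρ : 𝒴 → ℝ) (ε : ℝ),
        Q ρ ε = sInf {q : ℝ | ε ≤ ∑' y, ({y' : 𝒴 | Real.log (ρ y') ≤ q}).indicator ρ y}) :
    ∀ ε ∈ Set.Ioo (0 : ℝ) 1,
      ℙ {ω | Real.log (pF (W' ω) ω) < Q (fun y => pF y ω) ε}
        = ℙ {ω | Real.log (pinf (W' ω) ω) < Q (fun y => pinf y ω) ε} := by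
  intro ε hε
  -- Build the filtration
  have h𝓖le : ∀ n, 𝓖 n ≤ m0 := by
    intro n
    rw [h𝓖 n]
    exact iSup₂_le fun i _ => (hZ i).comap_le
  have h𝓖mono : Monotone 𝓖 := by
    intro n m hnm
    rw [h𝓖 n, h𝓖 m]
    exact biSup_mono fun i hi => Finset.mem_range.2
      (lt_of_lt_of_le (Finset.mem_range.1 hi) hnm)
  set ℱ : Filtration ℕ m0 := ⟨𝓖, h𝓖mono, h𝓖le⟩ with hℱ
  have h𝓖infle : 𝓖inf ≤ m0 := by
    rw [h𝓖inf]; exact iSup_le h𝓖le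
  have hsupF : MeasurableSpace.comap F mΘ ⊔ 𝓖inf ≤ m0 :=
    sup_le hF.comap_le h𝓖infle
  have hsup_eq : (⨆ n, ℱ n) = 𝓖inf := by rw [h𝓖inf]
  -- key: pinf y =ᵐ pF y for each y
  have key : ∀ y, pinf y =ᵐ[ℙ] pF y := by
    intro y
    set f : Ω → ℝ := (W ⁻¹' {y}).indicator (fun _ => (1 : ℝ)) with hf
    -- Lévy upward
    have hlevy := MeasureTheory.tendsto_ae_condExp (μ := ℙ) (ℱ := ℱ) f
    -- condexp over 𝓖inf equals pF y a.e.
    have htower : ℙ[f | 𝓖inf] =ᵐ[ℙ]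
        ℙ[ℙ[f | MeasurableSpace.comap F mΘ ⊔ 𝓖inf] | 𝓖inf] :=
      (condExp_condExp_of_le le_sup_right hsupF).symm
    obtain ⟨g, hgmeas, hgae⟩ := hID y
    have hgint : Integrable g ℙ :=
      (integrable_condExp.congr (hpF y).symm).congr hgae
    have hcond_pF : ℙ[pF y | 𝓖inf] =ᵐ[ℙ] pF y := by
      calc ℙ[pF y | 𝓖inf] =ᵐ[ℙ] ℙ[g | 𝓖inf] := condExp_congr_ae hgae
        _ = g := condExp_of_stronglyMeasurable h𝓖infle
              (hgmeas.stronglyMeasurable) hgint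
        _ =ᵐ[ℙ] pF y := hgae.symm
    have hinf_eq : ℙ[f | 𝓖inf] =ᵐ[ℙ] pF y :=
      htower.trans ((condExp_congr_ae (hCI y 𝓖inf le_rfl)).trans hcond_pF)
    -- a.e. all n : pn n y = ℙ[f | 𝓖 n]
    have hall : ∀ᵐ ω ∂ℙ, ∀ n, pn n y ω = (ℙ[f | 𝓖 n]) ω := by
      rw [ae_all_iff]; exact fun n => hpn n y
    filter_upwards [hlevy, hall, hpinf y, hinf_eq] with ω hωlevy hωall hωpinf hωeq
    have h1 : Tendsto (fun n => pn n y ω) atTop (nhds ((ℙ[f | ⨆ n, ℱ n]) ω)) := by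
      refine hωlevy.congr fun n => ?_
      exact (hωall n).symm
    have h2 : pinf y ω = (ℙ[f | ⨆ n, ℱ n]) ω := tendsto_nhds_unique hωpinf h1
    rw [h2]
    have : (ℙ[f | ⨆ n, ℱ n]) = ℙ[f | 𝓖inf] := by rw [hsup_eq]
    rw [this]; exact hωeq
  -- combine over countable 𝒴
  have hall : ∀ᵐ ω ∂ℙ, ∀ y, pinf y ω = pF y ω := by
    rw [ae_all_iff]; exact fun y => key y
  have hsets : {ω | Real.log (pF (W' ω) ω) < Q (fun y => pF y ω) ε}
      =ᵐ[ℙ] {ω | Real.log (pinf (W' ω) ω) < Q (fun y => pinf y ω) ε} := by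
    filter_upwards [hall] with ω hω
    have hfun : (fun y => pinf y ω) = fun y => pF y ω := funext fun y => hω y
    change (Real.log (pF (W' ω) ω) < Q (fun y => pF y ω) ε)
        = (Real.log (pinf (W' ω) ω) < Q (fun y => pinf y ω) ε)
    rw [hω (W' ω), hfun]
  exact measure_congr hsets
end

section
/- Let (Ω, 𝓐, ℙ) be a probability space, Θ a measurable space, F : Ω → Θ a random variable, 𝒢 ⊆ 𝓐 a sub-σ-algebra, A ∈ 𝒢 an event with ℙ(A) > 0, and B ∈ 𝓐 an event such that ℙ(B ∣ σ(F) ⊔ 𝒢) = ℙ(B ∣ σ(F)) ℙ-almost surely. Let ℙ_A := ℙ(· ∣ A) denote the conditional probability measure. Then the random variable ℙ(B ∣ σ(F)) (computed under ℙ) is a version of the conditional probability of B given σ(F) under ℙ_A; that is, E_{ℙ_A}[1_B ∣ σ(F)] = ℙ(B ∣ σ(F)) holds ℙ_A-almost surely. -/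
open MeasureTheory ProbabilityTheory

theorem cond_measure_condexp_eq_aux
    {Ω : Type*} (𝒢 : MeasurableSpace Ω) [m0 : MeasurableSpace Ω]
    (μ : Measure Ω) [IsProbabilityMeasure μ]
    {Θ : Type*} [mΘ : MeasurableSpace Θ] (F : Ω → Θ) (hF : Measurable F)
    (h𝒢 : 𝒢 ≤ m0)
    (A : Set Ω) (hA𝒢 : MeasurableSet[𝒢] A) (hApos : 0 < μ A)
    (B : Set Ω) (hB : MeasurableSet B)
    (hCI : μ[B.indicator (fun _ => (1 : ℝ)) | MeasurableSpace.comap F mΘ ⊔ 𝒢]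
        =ᵐ[μ] μ[B.indicator (fun _ => (1 : ℝ)) | MeasurableSpace.comap F mΘ]) :
    (μ[|A])[B.indicator (fun _ => (1 : ℝ)) | MeasurableSpace.comap F mΘ]
      =ᵐ[μ[|A]] μ[B.indicator (fun _ => (1 : ℝ)) | MeasurableSpace.comap F mΘ] := by
  have hm : MeasurableSpace.comap F mΘ ≤ m0 := hF.comap_le
  have hsup : MeasurableSpace.comap F mΘ ⊔ 𝒢 ≤ m0 := sup_le hm h𝒢
  have hA0 : μ A ≠ 0 := hApos.ne'
  have hAmeas : MeasurableSet A := h𝒢 A hA𝒢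
  haveI : IsProbabilityMeasure (μ[|A]) := cond_isProbabilityMeasure hA0
  set f : Ω → ℝ := B.indicator (fun _ => (1 : ℝ)) with hf_def
  have hBm : MeasurableSet B := hB
  have hf_int : Integrable f μ := (integrable_const (1 : ℝ)).indicator hBm
  have hf_int' : Integrable f (μ[|A]) := (integrable_const (1 : ℝ)).indicator hBm
  set g : Ω → ℝ := μ[f | MeasurableSpace.comap F mΘ] with hg_def
  have hg_meas : AEStronglyMeasurable[MeasurableSpace.comap F mΘ] g (μ[|A]) :=
    StronglyMeasurable.aestronglyMeasurable stronglyMeasurable_condExp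
  have hcond : (μ[|A]) = (μ A)⁻¹ • μ.restrict A := rfl
  have hg_int : Integrable g (μ[|A]) := by
    rw [hcond]
    exact (integrable_condExp.restrict).smul_measure (by simp [hA0])
  symm
  refine ae_eq_condExp_of_forall_setIntegral_eq hm hf_int'
    (fun s _ _ => hg_int.integrableOn) (fun s hs _ => ?_) hg_meas
  have hsm : MeasurableSet s := hm s hs
  rw [hcond]
  simp only [Measure.restrict_smul, integral_smul_measure]
  congr 1
  simp only [Measure.restrict_restrict hsm]
  have hsA : MeasurableSet[MeasurableSpace.comap F mΘ ⊔ 𝒢] (s ∩ A) :=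
    ((le_sup_left : MeasurableSpace.comap F mΘ ≤ _) s hs).inter
      ((le_sup_right : 𝒢 ≤ _) A hA𝒢)
  calc ∫ x in s ∩ A, g x ∂μ
      = ∫ x in s ∩ A, (μ[f | MeasurableSpace.comap F mΘ ⊔ 𝒢]) x ∂μ :=
        setIntegral_congr_ae (hsup _ hsA) (hCI.mono fun x hx _ => hx.symm)
    _ = ∫ x in s ∩ A, f x ∂μ := setIntegral_condExp hsup hf_int hsA

/-- The 'alternative probability model' device in the proof of Theorem 2:
if `P(B ∣ σ(F) ⊔ 𝒢) = P(B ∣ σ(F))` a.s. and `A ∈ 𝒢` has positive probability, then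
the P-version of `P(B ∣ σ(F))` is also a version of the conditional probability of
`B` given `σ(F)` under the conditioned measure `P[|A]`. -/
theorem cond_measure_condexp_eq
    {Ω : Type*} (𝒢 : MeasurableSpace Ω) [m0 : MeasurableSpace Ω] (μ : Measure Ω) [IsProbabilityMeasure μ]
    {Θ : Type*} [mΘ : MeasurableSpace Θ] (F : Ω → Θ) (hF : Measurable F)
    (h𝒢 : 𝒢 ≤ m0)
    (A : Set Ω) (hA𝒢 : MeasurableSet[𝒢] A) (hApos : 0 < μ A)
    (B : Set Ω) (hB : MeasurableSet B)
    (hCI : μ[B.indicator (fun _ => (1 : ℝ)) | MeasurableSpace.comap F mΘ ⊔ 𝒢]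
        =ᵐ[μ] μ[B.indicator (fun _ => (1 : ℝ)) | MeasurableSpace.comap F mΘ]) :
    (μ[|A])[B.indicator (fun _ => (1 : ℝ)) | MeasurableSpace.comap F mΘ]
      =ᵐ[μ[|A]] μ[B.indicator (fun _ => (1 : ℝ)) | MeasurableSpace.comap F mΘ] :=
  cond_measure_condexp_eq_aux 𝒢 (m0 := m0) μ F hF h𝒢 A hA𝒢 hApos B hB hCI
end
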